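/- arXiv:1604.03423 — 6 statements merged into one kernel-verified Lean document; each statement's English description precedes it below -/
import Mathlib

section
/- For all ε ∈ (0,1), the probability that ‖R‖ ≥ e·√n·(ln(n/ε)+2) is at most ε. -/
/-!
Trace method. For `k ≥ 1`, `‖R‖ ^ (2k) ≤ tr (R ^ (2k))`, and the trace is a sum over closed walks
of length `2k` of products of entries of `R`. Averaging over `g`, a walk contributes `0` if it has
a loop step or traverses some edge an odd number of times, and `1` otherwise. An even closed walk
uses at most `k` distinct edges, hence visits at most `k + 1` vertices, so it factors through
`Fin (k + 1)`: there are at most `n ^ (k + 1) * (k + 1) ^ (2k)` of them. Markov's inequality for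
the `2k`-th moment, with `2k ≈ log (n / ε)`, gives the bound.
-/

noncomputable def opNorm {α β : Type*} [Fintype α] [Fintype β] [DecidableEq β]
    (M : Matrix α β ℝ) : ℝ :=
  ‖LinearMap.toContinuousLinearMap (Matrix.toEuclideanLin M)‖

def sgn (b : Bool) : ℝ := if b then 1 else -1

noncomputable def Pr {n : ℕ} (P : (Sym2 (Fin n) → Bool) → Prop) : ℝ := by
  classical
  exact ((Finset.univ.filter P).card : ℝ) / (Fintype.card (Sym2 (Fin n) → Bool))

noncomputable def Ex {n : ℕ} (f : (Sym2 (Fin n) → Bool) → ℝ) : ℝ :=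
  (∑ g : Sym2 (Fin n) → Bool, f g) / (Fintype.card (Sym2 (Fin n) → Bool))

noncomputable def Rmat {n : ℕ} (g : Sym2 (Fin n) → Bool) : Matrix (Fin n) (Fin n) ℝ :=
  Matrix.of fun i j => if i = j then 0 else sgn (g s(i, j))

def cyc {m : ℕ} (j : Fin m) : Fin m := ⟨((j : ℕ) + 1) % m, Nat.mod_lt _ j.pos⟩

open Finset
open scoped Matrix.Norms.L2Operator

lemma Fin.image_univ_eq_insert_last {β : Type*} [DecidableEq β] {m : ℕ} (f : Fin (m + 1) → β) :
    univ.image f = insert (f (Fin.last m)) (univ.image (Fin.init f)) := by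
  rw [Fin.univ_castSuccEmb, cons_eq_insert, image_insert, map_eq_image, image_image]
  rfl

lemma Fin.sum_pi_univ_succ {α M : Type*} [Fintype α] [AddCommMonoid M] {m : ℕ}
    (F : (Fin (m + 1) → α) → M) : ∑ w, F w = ∑ x, ∑ u : Fin m → α, F (Fin.cons x u) := by
  rw [← Fintype.sum_prod_type']
  exact (Fintype.sum_equiv (Fin.consEquiv fun _ => α) _ _ fun _ => rfl).symm

lemma card_filter_card_image_le {α β : Type*} [Fintype α] [DecidableEq α] [Nonempty α]
    [Fintype β] [DecidableEq β] (r : ℕ) :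
    #{u : α → β | #(univ.image u) ≤ r} ≤ Fintype.card β ^ r * r ^ Fintype.card α := by
  have hfactor : ∀ u : α → β, #(univ.image u) ≤ r →
      ∃ (f : Fin r → β) (σ : α → Fin r), f ∘ σ = u := by
    intro u hu
    let e : univ.image u ↪ Fin r := (univ.image u).equivFin.toEmbedding.trans (Fin.castLEEmb hu)
    refine ⟨Function.extend e Subtype.val fun _ => u (Classical.arbitrary α),
      fun a => e ⟨u a, mem_image_of_mem _ (mem_univ a)⟩, funext fun a => ?_⟩
    exact e.injective.extend_apply _ _ _
  calc #{u : α → β | #(univ.image u) ≤ r}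
      ≤ #(univ.image fun p : (Fin r → β) × (α → Fin r) => p.1 ∘ p.2) := by
        refine card_le_card fun u hu => ?_
        obtain ⟨f, σ, rfl⟩ := hfactor u (mem_filter.1 hu).2
        exact mem_image_of_mem _ (mem_univ (f, σ))
    _ ≤ Fintype.card ((Fin r → β) × (α → Fin r)) := card_image_le
    _ = Fintype.card β ^ r * r ^ Fintype.card α := by simp

section Walk

variable {α : Type*} [DecidableEq α] {m : ℕ}

def stepEdge (w : Fin (m + 1) → α) (t : Fin m) : Sym2 α := s(w t.castSucc, w t.succ)

def IsEvenWalk (w : Fin (m + 1) → α) : Prop := ∀ e, Even #{t | stepEdge w t = e}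

instance [Fintype α] (w : Fin (m + 1) → α) : Decidable (IsEvenWalk w) :=
  Fintype.decidableForallFintype

omit [DecidableEq α] in
lemma init_stepEdge (w : Fin (m + 2) → α) : Fin.init (stepEdge w) = stepEdge (Fin.init w) :=
  rfl

lemma card_image_le_card_image_stepEdge_add_one (w : Fin (m + 1) → α) :
    #(univ.image w) ≤ #(univ.image (stepEdge w)) + 1 := by
  induction m with
  | zero => simp
  | succ m ih =>
    have hV := Fin.image_univ_eq_insert_last w
    have hE := Fin.image_univ_eq_insert_last (stepEdge w)
    rw [init_stepEdge] at hE
    by_cases hv : w (Fin.last _) ∈ univ.image (Fin.init w)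
    · rw [hV, insert_eq_of_mem hv, hE]
      exact (ih _).trans (by grw [← subset_insert])
    · -- an edge leading to a new vertex is itself new
      have he : stepEdge w (Fin.last m) ∉ univ.image (stepEdge (Fin.init w)) := by
        intro he
        obtain ⟨t, -, ht⟩ := mem_image.1 he
        have hmem : w (Fin.last _) ∈ stepEdge (Fin.init w) t := ht ▸ Sym2.mem_mk_right _ _
        rcases Sym2.mem_iff.1 hmem with h | h <;> exact hv (h ▸ mem_image_of_mem _ (mem_univ _))
      rw [hV, hE, card_insert_of_notMem hv, card_insert_of_notMem he]
      exact Nat.succ_le_succ (ih _)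

lemma IsEvenWalk.two_mul_card_image_stepEdge_le {w : Fin (m + 1) → α} (hw : IsEvenWalk w) :
    2 * #(univ.image (stepEdge w)) ≤ m := by
  have hfiber : ∀ e ∈ univ.image (stepEdge w), 2 ≤ #{t | stepEdge w t = e} := by
    intro e he
    obtain ⟨t, -, rfl⟩ := mem_image.1 he
    have hpos : 0 < #{s | stepEdge w s = stepEdge w t} := card_pos.2 ⟨t, by simp⟩
    obtain ⟨r, hr⟩ := hw (stepEdge w t)
    omega
  have := card_nsmul_le_sum _ _ _ hfiber
  rw [← card_eq_sum_card_image, smul_eq_mul, card_univ, Fintype.card_fin] at this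
  omega

lemma card_closed_even_walks_le [Fintype α] {k : ℕ} (hk : k ≠ 0) :
    #{w : Fin (2 * k + 1) → α | w (Fin.last _) = w 0 ∧ IsEvenWalk w} ≤
      Fintype.card α ^ (k + 1) * (k + 1) ^ (2 * k) := by
  have hk' : 0 < 2 * k := by omega
  have : Nonempty (Fin (2 * k)) := ⟨⟨0, hk'⟩⟩
  -- a closed walk is determined by all but its last vertex
  have hclosed : ∀ w : Fin (2 * k + 1) → α, w (Fin.last _) = w 0 →
      w = Fin.snoc (Fin.init w) (Fin.init w ⟨0, hk'⟩) := fun w hw => by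
    conv_lhs => rw [← Fin.snoc_init_self w, hw]
    rfl
  calc #{w : Fin (2 * k + 1) → α | w (Fin.last _) = w 0 ∧ IsEvenWalk w}
      ≤ #{u : Fin (2 * k) → α | #(univ.image u) ≤ k + 1} := by
        refine card_le_card_of_injOn Fin.init (fun w hw => ?_) fun w hw w' hw' h => ?_
        · simp only [coe_filter, mem_univ, true_and, Set.mem_ofPred_eq] at hw ⊢
          have := card_image_le_card_image_stepEdge_add_one w
          have := hw.2.two_mul_card_image_stepEdge_le
          have : #(univ.image (Fin.init w)) ≤ #(univ.image w) :=
            card_le_card (Fin.image_univ_eq_insert_last w ▸ subset_insert _ _)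
          omega
        · simp only [coe_filter, mem_univ, true_and, Set.mem_ofPred_eq] at hw hw'
          rw [hclosed w hw.1, hclosed w' hw'.1, h]
    _ ≤ Fintype.card α ^ (k + 1) * (k + 1) ^ (2 * k) := by
        simpa using card_filter_card_image_le (α := Fin (2 * k)) (β := α) (k + 1)

end Walk

theorem IsSelfAdjoint.norm_pow {E : Type*} [NormedRing E] [StarRing E] [CStarRing E] {a : E}
    (ha : IsSelfAdjoint a) {n : ℕ} (hn : n ≠ 0) : ‖a ^ n‖ = ‖a‖ ^ n := by
  refine le_antisymm (norm_pow_le' a (Nat.pos_of_ne_zero hn)) ?_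
  rcases (norm_nonneg a).eq_or_lt with h0 | hpos
  · rw [← h0, zero_pow hn]
    exact norm_nonneg _
  -- the C⋆-identity gives equality at a power of two `2 ^ j > n`; split off `a ^ n` there
  obtain ⟨j, hj⟩ : ∃ j, n < 2 ^ j := ⟨n, Nat.lt_two_pow_self⟩
  refine le_of_mul_le_mul_right ?_ (pow_pos hpos (2 ^ j - n))
  calc ‖a‖ ^ n * ‖a‖ ^ (2 ^ j - n) = ‖a ^ n * a ^ (2 ^ j - n)‖ := by
        rw [← pow_add, ← pow_add, Nat.add_sub_cancel' hj.le, ha.norm_pow_two_pow]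
    _ ≤ ‖a ^ n‖ * ‖a ^ (2 ^ j - n)‖ := norm_mul_le _ _
    _ ≤ ‖a ^ n‖ * ‖a‖ ^ (2 ^ j - n) := by
        gcongr
        exact norm_pow_le' a (Nat.sub_pos_of_lt hj)

namespace Matrix

section WalkWeight

variable {ι R : Type*} [Fintype ι] [DecidableEq ι] [CommSemiring R]

def walkWeight (A : Matrix ι ι R) {m : ℕ} (w : Fin (m + 1) → ι) : R :=
  ∏ t : Fin m, A (w t.castSucc) (w t.succ)

omit [Fintype ι] [DecidableEq ι] in
lemma walkWeight_cons (A : Matrix ι ι R) {m : ℕ} (x : ι) (u : Fin (m + 1) → ι) :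
    walkWeight A (Fin.cons x u : Fin (m + 2) → ι) = A x (u 0) * walkWeight A u := by
  simp [walkWeight, Fin.prod_univ_succ]

theorem pow_apply_eq_sum_walkWeight (A : Matrix ι ι R) (m : ℕ) (i j : ι) :
    (A ^ m) i j = ∑ w : Fin (m + 1) → ι,
      if w 0 = i ∧ w (Fin.last m) = j then walkWeight A w else 0 := by
  induction m generalizing i with
  | zero =>
    rw [← (Equiv.funUnique (Fin 1) ι).symm.sum_comp]
    simp [walkWeight, ite_and, one_apply]
  | succ m ih =>
    rw [pow_succ', mul_apply, Fin.sum_pi_univ_succ]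
    simp only [ih, mul_sum, mul_ite, mul_zero]
    rw [sum_comm]
    simp [walkWeight_cons, ite_and]

theorem trace_pow_eq_sum_walkWeight (A : Matrix ι ι R) (m : ℕ) :
    (A ^ m).trace = ∑ w : Fin (m + 1) → ι with w (Fin.last m) = w 0, walkWeight A w := by
  simp only [trace, diag, pow_apply_eq_sum_walkWeight]
  rw [sum_comm, sum_filter]
  refine sum_congr rfl fun w _ => ?_
  simp [ite_and, eq_comm]

end WalkWeight

variable {m n : Type*} [Fintype m] [Fintype n] [DecidableEq n]

theorem l2_opNorm_sq_le_sum_sq (B : Matrix m n ℝ) : ‖B‖ ^ 2 ≤ ∑ i, ∑ j, B i j ^ 2 := by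
  set S := ∑ i, ∑ j, B i j ^ 2
  have hS : 0 ≤ S := by positivity
  suffices ‖B‖ ≤ √S by simpa [Real.sq_sqrt hS] using pow_le_pow_left₀ (norm_nonneg B) this 2
  refine ContinuousLinearMap.opNorm_le_bound _ (Real.sqrt_nonneg S) fun x => ?_
  refine (pow_le_pow_iff_left₀ (norm_nonneg _) (by positivity) two_ne_zero).1 ?_
  rw [mul_pow, Real.sq_sqrt hS, EuclideanSpace.norm_sq_eq, EuclideanSpace.norm_sq_eq, sum_mul]
  refine sum_le_sum fun i _ => ?_
  simpa [mulVec, dotProduct] using sum_mul_sq_le_sq_mul_sq univ (B i) x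

theorem l2_opNorm_pow_le_trace_pow {A : Matrix n n ℝ} (hA : IsSelfAdjoint A) {k : ℕ} (hk : k ≠ 0) :
    ‖A‖ ^ (2 * k) ≤ (A ^ (2 * k)).trace := by
  have hsymm : ∀ i j, (A ^ k) j i = (A ^ k) i j := fun i j => by
    simpa using congrFun₂ (hA.pow k) i j
  calc ‖A‖ ^ (2 * k) = ‖A ^ k‖ ^ 2 := by rw [hA.norm_pow hk, ← pow_mul, mul_comm]
    _ ≤ ∑ i, ∑ j, (A ^ k) i j ^ 2 := l2_opNorm_sq_le_sum_sq _
    _ = (A ^ (2 * k)).trace := by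
        simp only [two_mul, pow_add, trace, diag, mul_apply, sq]
        exact sum_congr rfl fun i _ => sum_congr rfl fun j _ => by rw [hsymm]

end Matrix

open Matrix

lemma sum_prod_sgn_comp {ι E : Type*} [Fintype ι] [Fintype E] [DecidableEq E] (e : ι → E) :
    ∑ g : E → Bool, ∏ t, sgn (g (e t)) = ∏ x, (1 + (-1) ^ #{t | e t = x}) := by
  have hfib : ∀ g : E → Bool, ∏ t, sgn (g (e t)) = ∏ x, sgn (g x) ^ #{t | e t = x} := fun g => by
    rw [← prod_fiberwise univ e]
    refine prod_congr rfl fun x _ => ?_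
    rw [prod_congr rfl fun t ht => by rw [(mem_filter.1 ht).2], prod_const]
  rw [sum_congr rfl fun g _ => hfib g, ← Fintype.prod_sum fun x b => sgn b ^ #{t | e t = x}]
  simp [sgn]

lemma prod_one_add_neg_one_pow {E : Type*} [Fintype E] (c : E → ℕ) :
    ∏ x, (1 + (-1 : ℝ) ^ c x) = if ∀ x, Even (c x) then 2 ^ Fintype.card E else 0 := by
  split_ifs with h
  · simp [(h _).neg_one_pow, one_add_one_eq_two]
  · push Not at h
    obtain ⟨x, hx⟩ := h
    exact prod_eq_zero (mem_univ x) (by simp [(Nat.not_even_iff_odd.1 hx).neg_one_pow])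

section Probability

variable {n : ℕ}

lemma Ex_mono {f f' : (Sym2 (Fin n) → Bool) → ℝ} (h : ∀ g, f g ≤ f' g) : Ex f ≤ Ex f' :=
  div_le_div_of_nonneg_right (sum_le_sum fun g _ => h g) (Nat.cast_nonneg _)

lemma Ex_sum {κ : Type*} (s : Finset κ) (f : κ → (Sym2 (Fin n) → Bool) → ℝ) :
    Ex (fun g => ∑ i ∈ s, f i g) = ∑ i ∈ s, Ex (f i) := by
  simp only [Ex]
  rw [sum_comm, sum_div]

lemma Pr_mul_pow_le_Ex {X : (Sym2 (Fin n) → Bool) → ℝ} (hX : ∀ g, 0 ≤ X g) {t : ℝ} (ht : 0 ≤ t)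
    (p : ℕ) : Pr (fun g => t ≤ X g) * t ^ p ≤ Ex (fun g => X g ^ p) := by
  classical
  rw [Pr, Ex, div_mul_eq_mul_div]
  refine div_le_div_of_nonneg_right ?_ (Nat.cast_nonneg _)
  calc (#{g | t ≤ X g} : ℝ) * t ^ p = ∑ g with t ≤ X g, t ^ p := by
        rw [sum_const, nsmul_eq_mul]
    _ ≤ ∑ g with t ≤ X g, X g ^ p := sum_le_sum fun g hg => by
        gcongr
        exact (mem_filter.1 hg).2
    _ ≤ ∑ g, X g ^ p := sum_le_sum_of_subset_of_nonneg (filter_subset _ _) fun g _ _ => by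
        have := hX g
        positivity

end Probability

lemma isSelfAdjoint_Rmat {n : ℕ} (g : Sym2 (Fin n) → Bool) : IsSelfAdjoint (Rmat g) := by
  ext i j
  simp only [star_apply, Rmat, of_apply, star_trivial]
  by_cases h : i = j
  · simp [h]
  · rw [if_neg h, if_neg (Ne.symm h), Sym2.eq_swap]

lemma Ex_walkWeight_Rmat_le {n m : ℕ} (w : Fin (m + 1) → Fin n) :
    Ex (fun g => walkWeight (Rmat g) w) ≤ if IsEvenWalk w then 1 else 0 := by
  by_cases hloop : ∃ t : Fin m, w t.castSucc = w t.succ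
  · obtain ⟨t, ht⟩ := hloop
    have hzero : ∀ g, walkWeight (Rmat g) w = 0 := fun g =>
      prod_eq_zero (mem_univ t) (by simp [Rmat, ht])
    simp only [Ex, hzero, sum_const_zero, zero_div]
    split_ifs <;> norm_num
  · push Not at hloop
    have hsgn : ∀ g, walkWeight (Rmat g) w = ∏ t, sgn (g (stepEdge w t)) := fun g =>
      prod_congr rfl fun t _ => by simp [Rmat, stepEdge, hloop t]
    simp only [Ex, hsgn, sum_prod_sgn_comp, prod_one_add_neg_one_pow]
    split_ifs <;> simp_all [IsEvenWalk]

lemma Ex_opNorm_Rmat_pow_le {n k : ℕ} (hk : k ≠ 0) :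
    Ex (fun g : Sym2 (Fin n) → Bool => opNorm (Rmat g) ^ (2 * k)) ≤
      (n : ℝ) ^ (k + 1) * ((k : ℝ) + 1) ^ (2 * k) := by
  calc Ex (fun g : Sym2 (Fin n) → Bool => opNorm (Rmat g) ^ (2 * k))
      ≤ Ex (fun g => (Rmat g ^ (2 * k)).trace) :=
        Ex_mono fun g => l2_opNorm_pow_le_trace_pow (isSelfAdjoint_Rmat g) hk
    _ = ∑ w : Fin (2 * k + 1) → Fin n with w (Fin.last _) = w 0,
          Ex (fun g => walkWeight (Rmat g) w) := by
        simp only [trace_pow_eq_sum_walkWeight, Ex_sum]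
    _ ≤ ∑ w : Fin (2 * k + 1) → Fin n with w (Fin.last _) = w 0,
          if IsEvenWalk w then 1 else 0 := sum_le_sum fun w _ => Ex_walkWeight_Rmat_le w
    _ = #{w : Fin (2 * k + 1) → Fin n | w (Fin.last _) = w 0 ∧ IsEvenWalk w} := by
        rw [sum_boole, filter_filter]
    _ ≤ (n : ℝ) ^ (k + 1) * ((k : ℝ) + 1) ^ (2 * k) := by
        exact_mod_cast (card_closed_even_walks_le hk).trans_eq (by simp)

lemma pow_mul_pow_le_of_log_le {n ε : ℝ} (hn : 0 < n) (hε : 0 < ε) {k : ℕ} (hk : k ≠ 0)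
    (h1 : Real.log (n / ε) ≤ 2 * k) (h2 : 2 * k ≤ Real.log (n / ε) + 2) :
    n ^ (k + 1) * ((k : ℝ) + 1) ^ (2 * k) ≤
      ε * (Real.exp 1 * Real.sqrt n * (Real.log (n / ε) + 2)) ^ (2 * k) := by
  set L := Real.log (n / ε)
  have hn_le : n ≤ ε * Real.exp 1 ^ (2 * k) := by
    rw [← Real.exp_nat_mul, ← div_le_iff₀' hε, ← Real.exp_log (div_pos hn hε)]
    gcongr
    push_cast
    linarith
  have hk_le : (k : ℝ) + 1 ≤ L + 2 := by
    have : (1 : ℝ) ≤ k := by exact_mod_cast Nat.one_le_iff_ne_zero.2 hk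
    linarith
  calc n ^ (k + 1) * ((k : ℝ) + 1) ^ (2 * k)
      = n * (n ^ k * ((k : ℝ) + 1) ^ (2 * k)) := by ring
    _ ≤ (ε * Real.exp 1 ^ (2 * k)) * (n ^ k * (L + 2) ^ (2 * k)) := by
        gcongr
    _ = ε * (Real.exp 1 * Real.sqrt n * (L + 2)) ^ (2 * k) := by
        rw [mul_pow, mul_pow, pow_mul (Real.sqrt n), Real.sq_sqrt hn.le]
        ring

theorem stmt2 (n : ℕ) (hn : 1 ≤ n) (ε : ℝ) (hε0 : 0 < ε) (hε1 : ε < 1) :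
    Pr (fun g : Sym2 (Fin n) → Bool =>
        Real.exp 1 * Real.sqrt n * (Real.log (n / ε) + 2) ≤ opNorm (Rmat g)) ≤ ε := by
  have hn0 : (0 : ℝ) < n := by exact_mod_cast hn
  set L := Real.log (n / ε)
  have hL : 0 < L := Real.log_pos ((one_lt_div hε0).2 (hε1.trans_le (by exact_mod_cast hn)))
  set k := ⌈L / 2⌉₊
  have hk : k ≠ 0 := (Nat.ceil_pos.2 (by positivity)).ne'
  have h1 : L ≤ 2 * k := by linarith [Nat.le_ceil (L / 2)]
  have h2 : 2 * k ≤ L + 2 := by linarith [Nat.ceil_lt_add_one (by positivity : 0 ≤ L / 2)]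
  set t := Real.exp 1 * Real.sqrt n * (L + 2)
  have ht : 0 < t := by positivity
  have hmarkov := Pr_mul_pow_le_Ex (n := n) (X := fun g => opNorm (Rmat g)) (fun _ => norm_nonneg _)
    ht.le (2 * k)
  have hmoment := Ex_opNorm_Rmat_pow_le (n := n) hk
  have harith := pow_mul_pow_le_of_log_le hn0 hε0 hk h1 h2
  exact le_of_mul_le_mul_right (by linarith) (pow_pos ht (2 * k))
end

section
/- Let k ≥ 1 be an integer and let i_1,…,i_{2k} ∈ {1,…,n}, with i_{2k+1} := i_1. If E[∏_{j=1}^{2k} R(i_j, i_{j+1})] ≠ 0, then the number of distinct values among i_1,…,i_{2k} is at most k+1. Moreover this bound is sharp: if n ≥ k+1, there exist i_1,…,i_{2k} ∈ {1,…,n} taking exactly k+1 distinct values for which E[∏_{j=1}^{2k} R(i_j, i_{j+1})] = 1. -/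
/-!
Write `e_j = {i_j, i_{j+1}}` for the steps of the closed walk `i`. The product vanishes
identically if some step is a loop, since `R` has zero diagonal. If some edge `x` is traversed an
odd number of times, flipping the value of `g` at `x` is a measure-preserving involution that
negates the product, so the expectation vanishes again. Otherwise each of the distinct edges is
traversed at least twice, so there are at most `k` of them, and a walk visits at most one vertex
more than it has distinct edges, because every newly visited vertex is entered through a new edge.

For sharpness, the star walk `0, 1, 0, 2, …, 0, k` traverses each edge `{0, a}` twice in a row,
so the product is a product of squares of `±1`, i.e. identically `1`.
-/

open Finset

lemma sgn_mul_self (b : Bool) : sgn b * sgn b = 1 := by cases b <;> simp [sgn]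

lemma sgn_not (b : Bool) : sgn (!b) = -sgn b := by cases b <;> simp [sgn]

section Rmat

variable {n : ℕ} (g : Sym2 (Fin n) → Bool)

lemma Rmat_self (u : Fin n) : Rmat g u u = 0 := by simp [Rmat]

lemma Rmat_of_ne {u v : Fin n} (h : u ≠ v) : Rmat g u v = sgn (g s(u, v)) := by simp [Rmat, h]

lemma Rmat_mul_Rmat_swap {u v : Fin n} (h : u ≠ v) : Rmat g u v * Rmat g v u = 1 := by
  rw [Rmat_of_ne g h, Rmat_of_ne g h.symm, Sym2.eq_swap, sgn_mul_self]

end Rmat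

lemma Ex_const_one {n : ℕ} : Ex (n := n) (fun _ => 1) = 1 := by
  simp [Ex]

lemma sum_prod_sgn_eq_zero_of_odd {α ι : Type*} [Fintype α] [DecidableEq α] [Fintype ι]
    (e : ι → α) {x : α} (hx : Odd #{j | e j = x}) :
    ∑ g : α → Bool, ∏ j, sgn (g (e j)) = 0 := by
  set flip : (α → Bool) → α → Bool := fun g => Function.update g x (!g x)
  have hflip (g : α → Bool) : ∏ j, sgn (flip g (e j)) = -∏ j, sgn (g (e j)) := by
    have hfactor (j : ι) :
        sgn (flip g (e j)) = (if e j = x then -1 else 1) * sgn (g (e j)) := by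
      by_cases h : e j = x <;> simp [flip, h, sgn_not]
    rw [prod_congr rfl fun j _ => hfactor j, prod_mul_distrib, prod_ite, prod_const,
      prod_const_one, hx.neg_one_pow, mul_one, neg_one_mul]
  refine sum_ninvolution flip (fun g => by rw [hflip, add_neg_cancel]) (fun g _ h => ?_)
    (fun _ => mem_univ _) (fun g => by simp [flip])
  simpa [flip] using congr_fun h x

def closedWalkEdge {V : Type*} {m : ℕ} (i : Fin m → V) (j : Fin m) : Sym2 V := s(i j, i (cyc j))

section ClosedWalk

variable {n m : ℕ} {i : Fin m → Fin n}

lemma ne_cyc_of_Ex_ne_zero (hEx : Ex (fun g => ∏ j, Rmat g (i j) (i (cyc j))) ≠ 0) (j : Fin m) :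
    i j ≠ i (cyc j) := by
  intro hj
  apply hEx
  rw [Ex, sum_eq_zero fun g _ => prod_eq_zero (mem_univ j) (by rw [hj, Rmat_self]), zero_div]

lemma even_card_closedWalkEdge_of_Ex_ne_zero
    (hEx : Ex (fun g => ∏ j, Rmat g (i j) (i (cyc j))) ≠ 0) (x : Sym2 (Fin n)) :
    Even #{j | closedWalkEdge i j = x} := by
  by_contra hodd
  apply hEx
  simp only [Ex, Rmat_of_ne _ (ne_cyc_of_Ex_ne_zero hEx _)]
  exact div_eq_zero_iff.mpr
    (.inl (sum_prod_sgn_eq_zero_of_odd (closedWalkEdge i) (Nat.not_even_iff_odd.mp hodd)))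

end ClosedWalk

lemma two_mul_card_image_le_of_even {ι β : Type*} [DecidableEq β] {s : Finset ι} {e : ι → β}
    (he : ∀ x, Even #{j ∈ s | e j = x}) : 2 * #(s.image e) ≤ #s := by
  rw [card_eq_sum_card_image e s, mul_comm, ← smul_eq_mul]
  refine card_nsmul_le_sum _ _ _ fun x hx => ?_
  obtain ⟨j, hj, rfl⟩ := mem_image.mp hx
  have hpos : 0 < #{a ∈ s | e a = e j} := card_pos.mpr ⟨j, mem_filter.mpr ⟨hj, rfl⟩⟩
  obtain ⟨r, hr⟩ := he (e j)
  omega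

lemma card_image_range_succ_le {V : Type*} [DecidableEq V] (w : ℕ → V) (t : ℕ) :
    #((range (t + 1)).image w) ≤ #((range t).image fun j => s(w j, w (j + 1))) + 1 := by
  induction t with
  | zero => simp
  | succ t ih =>
    have hverts : (range (t + 2)).image w = insert (w (t + 1)) ((range (t + 1)).image w) := by
      rw [range_add_one, image_insert]
    have hedges : (range (t + 1)).image (fun j => s(w j, w (j + 1))) =
        insert s(w t, w (t + 1)) ((range t).image fun j => s(w j, w (j + 1))) := by
      rw [range_add_one, image_insert]
    rw [hverts, hedges]
    by_cases hold : w (t + 1) ∈ (range (t + 1)).image w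
    · rw [insert_eq_of_mem hold]
      exact ih.trans (Nat.add_le_add_right (card_le_card (subset_insert _ _)) 1)
    · have hnew : s(w t, w (t + 1)) ∉ (range t).image fun j => s(w j, w (j + 1)) := by
        intro hmem
        obtain ⟨j, hj, hjt⟩ := mem_image.mp hmem
        have hend : w (t + 1) = w j ∨ w (t + 1) = w (j + 1) := by
          rw [← Sym2.mem_iff, hjt]
          exact Sym2.mem_mk_right _ _
        rw [mem_range] at hj
        rcases hend with h | h <;>
          exact hold (mem_image.mpr ⟨_, mem_range.mpr (by omega), h.symm⟩)
      rw [card_insert_of_notMem hold, card_insert_of_notMem hnew]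
      omega

lemma image_range_mod {β : Type*} [DecidableEq β] {m : ℕ} (hm : 0 < m) (f : Fin m → β) :
    (range m).image (fun j => f ⟨j % m, Nat.mod_lt j hm⟩) = univ.image f := by
  ext y
  simp only [mem_image, mem_range, mem_univ, true_and]
  constructor
  · rintro ⟨j, -, rfl⟩
    exact ⟨_, rfl⟩
  · rintro ⟨a, rfl⟩
    exact ⟨a, a.isLt, by simp [Nat.mod_eq_of_lt a.isLt]⟩

lemma card_image_le_card_image_closedWalkEdge_add_one {V : Type*} [DecidableEq V] {m : ℕ}
    (i : Fin m → V) : #(univ.image i) ≤ #(univ.image (closedWalkEdge i)) + 1 := by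
  rcases m.eq_zero_or_pos with rfl | hm
  · simp
  -- Unrolled periodically, the closing step `i (m - 1) → i 0` becomes an ordinary step.
  set w : ℕ → V := fun j => i ⟨j % m, Nat.mod_lt j hm⟩
  have hverts : univ.image i = (range m).image w := (image_range_mod hm i).symm
  have hedges : univ.image (closedWalkEdge i) = (range m).image fun j => s(w j, w (j + 1)) := by
    rw [← image_range_mod hm]
    simp [closedWalkEdge, cyc, w, Nat.mod_add_mod]
  calc #(univ.image i) ≤ #((range (m + 1)).image w) :=
        hverts ▸ card_le_card (image_subset_image (range_subset_range.mpr m.le_succ))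
    _ ≤ #((range m).image fun j => s(w j, w (j + 1))) + 1 := card_image_range_succ_le w m
    _ = #(univ.image (closedWalkEdge i)) + 1 := by rw [hedges]

lemma Fin.prod_univ_two_mul {M : Type*} [CommMonoid M] {k : ℕ} (f : Fin (2 * k) → M) :
    ∏ j, f j = ∏ a : Fin k, f ⟨2 * a, by omega⟩ * f ⟨2 * a + 1, by omega⟩ := by
  rw [← (finProdFinEquiv.trans (finCongr (Nat.mul_comm k 2))).prod_comp, Fintype.prod_prod_type]
  refine prod_congr rfl fun a _ => ?_
  rw [Fin.prod_univ_two]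
  congr 1 <;> congr 1 <;> ext <;> simp [mul_comm, add_comm]

def starWalk (k : ℕ) (j : Fin (2 * k)) : Fin (k + 1) :=
  if (j : ℕ) % 2 = 0 then 0 else ⟨j / 2 + 1, by omega⟩

section StarWalk

variable {k : ℕ}

lemma starWalk_two_mul (a : Fin k) : starWalk k ⟨2 * a, by omega⟩ = 0 := by
  simp [starWalk]

lemma starWalk_two_mul_add_one (a : Fin k) : starWalk k ⟨2 * a + 1, by omega⟩ = a.succ := by
  simp [starWalk, Fin.ext_iff]
  omega

lemma starWalk_cyc_two_mul (a : Fin k) : starWalk k (cyc ⟨2 * a, by omega⟩) = a.succ := by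
  rw [← starWalk_two_mul_add_one]
  exact congrArg _ (Fin.ext (Nat.mod_eq_of_lt (by simp; omega)))

lemma starWalk_cyc_two_mul_add_one (a : Fin k) :
    starWalk k (cyc ⟨2 * a + 1, by omega⟩) = 0 := by
  have hmod : (2 * (a : ℕ) + 1 + 1) % (2 * k) % 2 = 0 := by
    rw [Nat.mod_mod_of_dvd _ (dvd_mul_right 2 k)]
    omega
  simp [starWalk, cyc, hmod]

lemma starWalk_surjective (hk : 1 ≤ k) : Function.Surjective (starWalk k) := by
  intro v
  cases v using Fin.cases with
  | zero => exact ⟨⟨0, by omega⟩, by simp [starWalk]⟩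
  | succ a => exact ⟨_, starWalk_two_mul_add_one a⟩

lemma prod_Rmat_starWalk {n : ℕ} (hkn : k + 1 ≤ n) (g : Sym2 (Fin n) → Bool) :
    ∏ j, Rmat g (Fin.castLE hkn (starWalk k j)) (Fin.castLE hkn (starWalk k (cyc j))) = 1 := by
  rw [Fin.prod_univ_two_mul]
  refine prod_eq_one fun a _ => ?_
  rw [starWalk_two_mul, starWalk_cyc_two_mul, starWalk_two_mul_add_one,
    starWalk_cyc_two_mul_add_one]
  exact Rmat_mul_Rmat_swap g ((Fin.castLE_injective hkn).ne (Fin.succ_ne_zero a).symm)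

end StarWalk

theorem stmt3_general (n k : ℕ) (hk : 1 ≤ k) :
    (∀ i : Fin (2 * k) → Fin n,
        Ex (fun g => ∏ j : Fin (2 * k), Rmat g (i j) (i (cyc j))) ≠ 0 →
        (Finset.univ.image i).card ≤ k + 1) ∧
    (k + 1 ≤ n →
      ∃ i : Fin (2 * k) → Fin n,
        (Finset.univ.image i).card = k + 1 ∧
        Ex (fun g => ∏ j : Fin (2 * k), Rmat g (i j) (i (cyc j))) = 1) := by
  refine ⟨fun i hEx => ?_, fun hkn => ?_⟩
  · have hedges : 2 * #(univ.image (closedWalkEdge i)) ≤ 2 * k := by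
      simpa using two_mul_card_image_le_of_even (even_card_closedWalkEdge_of_Ex_ne_zero hEx)
    have hverts := card_image_le_card_image_closedWalkEdge_add_one i
    omega
  · refine ⟨Fin.castLE hkn ∘ starWalk k, ?_, ?_⟩
    · rw [← image_image, image_univ_of_surjective (starWalk_surjective hk),
        card_image_of_injective _ (Fin.castLE_injective hkn), card_univ, Fintype.card_fin]
    · simp only [Function.comp_apply, prod_Rmat_starWalk, Ex_const_one]

theorem stmt3 (n k : ℕ) (hn : 1 ≤ n) (hk : 1 ≤ k) :
    (∀ i : Fin (2 * k) → Fin n,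
        Ex (fun g => ∏ j : Fin (2 * k), Rmat g (i j) (i (cyc j))) ≠ 0 →
        (Finset.univ.image i).card ≤ k + 1) ∧
    (k + 1 ≤ n →
      ∃ i : Fin (2 * k) → Fin n,
        (Finset.univ.image i).card = k + 1 ∧
        Ex (fun g => ∏ j : Fin (2 * k), Rmat g (i j) (i (cyc j))) = 1) :=
  stmt3_general n k hk
end

section
/- Let n ≥ 1 and let b ≥ c ≥ 0 be integers with c ≤ b. The number of tuples (d_1,…,d_b) ∈ {1,…,n}^b whose set of coordinate values has size at most b − c is at most C(b,c)·n^{b−c}·(b−c)^c, which in turn is at most b^{2c}·n^{b−c}. -/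
/-!
A tuple `d` taking at most `b - c` values has a set `R` of at most `b - c` positions on which
it already takes all its values, so any `c` positions `S` outside `R` satisfy
`d '' S ⊆ d '' Sᶜ`. For a fixed `S` such a tuple is determined by its values on `Sᶜ`
(`n ^ (b - c)` choices) together with, for each `i ∈ S`, a position of `Sᶜ` carrying the
same value (`(b - c) ^ c` choices); summing over the `C(b, c)` sets `S` gives the first bound.
The second is `C(b, c) ≤ b ^ c` and `b - c ≤ b`.
-/

open Finset

section

variable {ι α : Type*} [Fintype ι] [DecidableEq ι] [DecidableEq α]

theorem exists_card_eq_image_subset_image_compl (d : ι → α) {c : ℕ}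
    (hc : #(univ.image d) + c ≤ Fintype.card ι) :
    ∃ S : Finset ι, #S = c ∧ S.image d ⊆ Sᶜ.image d := by
  obtain ⟨R, -, hRinj, hRimage⟩ := exists_subset_injOn_image_eq_of_surjOn (f := d) Set.univ
    (univ.image d) (by simpa using Set.surjOn_image d Set.univ)
  have hRcard : #R = #(univ.image d) := by rw [← hRimage, card_image_of_injOn hRinj]
  obtain ⟨S, hSR, rfl⟩ := exists_subset_card_eq (s := Rᶜ) (n := c) (by rw [card_compl]; omega)
  refine ⟨S, rfl, ?_⟩
  calc S.image d ⊆ univ.image d := image_subset_image (subset_univ S)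
    _ = R.image d := hRimage.symm
    _ ⊆ Sᶜ.image d :=
        image_subset_image fun i hi => mem_compl.2 fun hiS => mem_compl.1 (hSR hiS) hi

theorem card_filter_image_subset_image_compl_le [Fintype α] (S : Finset ι) :
    #{d : ι → α | S.image d ⊆ Sᶜ.image d} ≤
      Fintype.card α ^ #Sᶜ * #Sᶜ ^ #S := by
  let extend : ((Sᶜ : Finset ι) → α) × (S → (Sᶜ : Finset ι)) → ι → α :=
    fun p i => if hi : i ∈ S then p.1 (p.2 ⟨i, hi⟩) else p.1 ⟨i, mem_compl.2 hi⟩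
  calc #{d : ι → α | S.image d ⊆ Sᶜ.image d}
      ≤ #(univ.image extend) := by
        refine card_le_card fun d hd => ?_
        simp only [mem_filter, mem_univ, true_and, subset_iff, mem_image] at hd
        choose g hg using fun i : S => hd ⟨i, i.2, rfl⟩
        refine mem_image.2
          ⟨(fun j => d j, fun i => ⟨g i, (hg i).1⟩), mem_univ _, funext fun i => ?_⟩
        by_cases hi : i ∈ S
        · simp [extend, hi, (hg ⟨i, hi⟩).2]
        · simp [extend, hi]
    _ ≤ Fintype.card (((Sᶜ : Finset ι) → α) × (S → (Sᶜ : Finset ι))) :=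
        card_image_le.trans_eq card_univ
    _ = Fintype.card α ^ #Sᶜ * #Sᶜ ^ #S := by
        simp only [Fintype.card_prod, Fintype.card_fun, Fintype.card_coe]

theorem card_filter_card_image_add_le [Fintype α] (c : ℕ) :
    #{d : ι → α | #(univ.image d) + c ≤ Fintype.card ι} ≤
      (Fintype.card ι).choose c * Fintype.card α ^ (Fintype.card ι - c) *
        (Fintype.card ι - c) ^ c := by
  calc #{d : ι → α | #(univ.image d) + c ≤ Fintype.card ι}
      ≤ #((powersetCard c univ).biUnion fun S => {d : ι → α | S.image d ⊆ Sᶜ.image d}) := by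
        refine card_le_card fun d hd => ?_
        obtain ⟨S, hS, hSd⟩ := exists_card_eq_image_subset_image_compl d (mem_filter.1 hd).2
        exact mem_biUnion.2 ⟨S, mem_powersetCard.2 ⟨subset_univ S, hS⟩, by simpa using hSd⟩
    _ ≤ ∑ S ∈ powersetCard c univ, #{d : ι → α | S.image d ⊆ Sᶜ.image d} := card_biUnion_le
    _ ≤ ∑ _S ∈ powersetCard c (univ : Finset ι),
          Fintype.card α ^ (Fintype.card ι - c) * (Fintype.card ι - c) ^ c := by
        refine sum_le_sum fun S hS => ?_
        obtain ⟨-, rfl⟩ := mem_powersetCard.1 hS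
        simpa [card_compl] using card_filter_image_subset_image_compl_le (α := α) S
    _ = _ := by rw [sum_const, card_powersetCard, card_univ, smul_eq_mul, mul_assoc]

end

theorem choose_mul_mul_sub_pow_le (b c m : ℕ) :
    b.choose c * m * (b - c) ^ c ≤ b ^ (2 * c) * m :=
  calc b.choose c * m * (b - c) ^ c ≤ b ^ c * m * b ^ c := by
        gcongr
        · exact Nat.choose_le_pow b c
        · exact Nat.sub_le b c
    _ = b ^ (2 * c) * m := by ring

theorem stmt4_general (n b c : ℕ) (hcb : c ≤ b) :
    ((Finset.univ.filter fun d : Fin b → Fin n =>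
          (Finset.univ.image d).card ≤ b - c).card
        ≤ Nat.choose b c * n ^ (b - c) * (b - c) ^ c) ∧
    Nat.choose b c * n ^ (b - c) * (b - c) ^ c ≤ b ^ (2 * c) * n ^ (b - c) := by
  refine ⟨?_, choose_mul_mul_sub_pow_le b c _⟩
  have hcount := card_filter_card_image_add_le (ι := Fin b) (α := Fin n) c
  simp only [Fintype.card_fin] at hcount
  rwa [filter_congr fun d _ => show #(univ.image d) ≤ b - c ↔ #(univ.image d) + c ≤ b by omega]

theorem stmt4 (n b c : ℕ) (hn : 1 ≤ n) (hcb : c ≤ b) :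
    ((Finset.univ.filter fun d : Fin b → Fin n =>
          (Finset.univ.image d).card ≤ b - c).card
        ≤ Nat.choose b c * n ^ (b - c) * (b - c) ^ c) ∧
    Nat.choose b c * n ^ (b - c) * (b - c) ^ c ≤ b ^ (2 * c) * n ^ (b - c) :=
  stmt4_general n b c hcb
end

section
/- Let (Ω, ℙ) be a probability space, let I be a finite index set with |I| = N ≥ 1, let {M_i : i ∈ I} be random real matrices on Ω all of the same dimensions, and let M = (1/N)·Σ_{i∈I} M_i. Let B and p be positive real numbers such that for every i ∈ I and every real x with 1/2 ≤ x ≤ N, ℙ(‖M_i‖ > B·x) ≤ p/(64·x³). Then ℙ(‖M‖ ≥ B) < p. -/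
/-!
Since `‖M‖ ≤ (1/N) ∑ ‖M_i‖`, it suffices to bound `ℙ(∑ aᵢ ≥ B N)` for `aᵢ = ‖M_i‖`. With
probability at least `1 - N · p / (64 N³)` every `aᵢ` is at most `B N ≤ B 2^K`, where `2^K ≤ 2N`.
Splitting each `aᵢ` along the dyadic levels `B 2^k / 2`, `k ≤ K`, gives
`∑ aᵢ ≤ N B / 2 + ∑ₖ (B 2^k / 2) · #{i | aᵢ > B 2^k / 2}`, so `∑ aᵢ ≥ B N` forces some level `k`
to be exceeded by at least `N / (2 · 4^k)` indices. By Markov's inequality for this count, that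
has probability at most `p / 2^(k+2)`, and `p / 64 + ∑ₖ p / 2^(k+2) < p`.
-/

open Finset MeasureTheory

section OpNorm

variable {α β : Type*} [Fintype α] [Fintype β] [DecidableEq β]

lemma opNorm_eq_norm_toCLM (A : Matrix α β ℝ) :
    opNorm A = ‖(Matrix.toEuclideanLin.trans LinearMap.toContinuousLinearMap) A‖ := rfl

lemma opNorm_smul (c : ℝ) (A : Matrix α β ℝ) : opNorm (c • A) = |c| * opNorm A := by
  simp only [opNorm_eq_norm_toCLM, map_smul, norm_smul, Real.norm_eq_abs]

lemma opNorm_sum_le {ι : Type*} (s : Finset ι) (A : ι → Matrix α β ℝ) :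
    opNorm (∑ i ∈ s, A i) ≤ ∑ i ∈ s, opNorm (A i) := by
  simp only [opNorm_eq_norm_toCLM, map_sum]
  exact norm_sum_le _ _

lemma continuous_opNorm : Continuous (opNorm : Matrix α β ℝ → ℝ) :=
  continuous_norm.comp
    (Matrix.toEuclideanLin.trans LinearMap.toContinuousLinearMap :
      Matrix α β ℝ ≃ₗ[ℝ] _).toLinearMap.continuous_of_finiteDimensional

lemma measurable_opNorm {Ω : Type*} [MeasurableSpace Ω] {A : Ω → Matrix α β ℝ}
    (hA : ∀ a b, Measurable fun ω => A ω a b) : Measurable fun ω => opNorm (A ω) := by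
  have hpi : @Measurable Ω (α → β → ℝ) _ _ A :=
    measurable_pi_lambda _ fun a => measurable_pi_lambda _ fun b => hA a b
  exact (continuous_opNorm.comp (continuous_id (X := α → β → ℝ))).measurable.comp hpi

end OpNorm

lemma Nat.exists_le_two_pow_le_two_mul {n : ℕ} (hn : n ≠ 0) : ∃ K, n ≤ 2 ^ K ∧ 2 ^ K ≤ 2 * n :=
  ⟨Nat.log 2 n + 1, (Nat.lt_pow_succ_log_self one_lt_two n).le,
    by rw [pow_succ, mul_comm]; exact Nat.mul_le_mul_left 2 (Nat.pow_log_le_self 2 hn)⟩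

lemma le_add_sum_ite_lt_two_pow {c y : ℝ} (hc : 0 ≤ c) (K : ℕ) (hy : y ≤ c * 2 ^ (K + 1)) :
    y ≤ c + ∑ k ∈ range (K + 1), if c * 2 ^ k < y then c * 2 ^ k else 0 := by
  induction K with
  | zero =>
    simp only [zero_add, pow_one, sum_range_one, pow_zero, mul_one] at hy ⊢
    split_ifs <;> linarith
  | succ K ih =>
    rw [sum_range_succ]
    by_cases hK : y ≤ c * 2 ^ (K + 1)
    · have : (0 : ℝ) ≤ if c * 2 ^ (K + 1) < y then c * 2 ^ (K + 1) else 0 := by positivity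
      linarith [ih hK]
    · push Not at hK
      have hall : ∀ k ∈ range (K + 1), c * 2 ^ k < y := fun k hk =>
        (mul_le_mul_of_nonneg_left (pow_le_pow_right₀ one_le_two
          (by have := mem_range.1 hk; omega)) hc).trans_lt hK
      have hgeom : c + ∑ k ∈ range (K + 1), c * (2 : ℝ) ^ k = c * 2 ^ (K + 1) := by
        have := geom_sum_mul (2 : ℝ) (K + 1)
        rw [← mul_sum]; linear_combination c * this
      rw [sum_congr rfl fun k hk => if_pos (hall k hk), if_pos hK, ← add_assoc, hgeom]
      linarith [show c * 2 ^ (K + 1 + 1) = c * 2 ^ (K + 1) + c * 2 ^ (K + 1) by ring]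

lemma sum_le_card_mul_add_sum_card_lt {ι : Type*} [Fintype ι] {a : ι → ℝ} {c : ℝ} (hc : 0 ≤ c)
    {K : ℕ} (ha : ∀ i, a i ≤ c * 2 ^ (K + 1)) :
    ∑ i, a i ≤ Fintype.card ι * c + ∑ k ∈ range (K + 1), c * 2 ^ k * #{i | c * 2 ^ k < a i} :=
  calc ∑ i, a i
      ≤ ∑ i, (c + ∑ k ∈ range (K + 1), if c * 2 ^ k < a i then c * 2 ^ k else 0) :=
        sum_le_sum fun i _ => le_add_sum_ite_lt_two_pow hc K (ha i)
    _ = _ := by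
        rw [sum_add_distrib, sum_comm]
        simp [sum_ite, mul_comm]

lemma exists_le_card_lt_of_le_sum {ι : Type*} [Fintype ι] {a : ι → ℝ} {c : ℝ} (hc : 0 < c)
    {K : ℕ} (ha : ∀ i, a i ≤ c * 2 ^ (K + 1)) (hsum : 2 * c * Fintype.card ι ≤ ∑ i, a i) :
    ∃ k ∈ range (K + 1), (Fintype.card ι : ℝ) / (2 * 4 ^ k) ≤ #{i | c * 2 ^ k < a i} := by
  by_contra! hcard
  set N : ℝ := (Fintype.card ι : ℝ)
  have hterm : ∀ k : ℕ, c * 2 ^ k * (N / (2 * 4 ^ k)) = c * N / 2 * (1 / 2) ^ k := by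
    intro k
    rw [show (4 : ℝ) ^ k = 2 ^ k * 2 ^ k by rw [← mul_pow]; norm_num, one_div_pow]
    field_simp
  have hlt : ∑ k ∈ range (K + 1), c * 2 ^ k * #{i | c * 2 ^ k < a i}
      < ∑ k ∈ range (K + 1), c * 2 ^ k * (N / (2 * 4 ^ k)) :=
    sum_lt_sum_of_nonempty nonempty_range_add_one fun k hk =>
      mul_lt_mul_of_pos_left (hcard k hk) (by positivity)
  have hgeom : ∑ k ∈ range (K + 1), c * 2 ^ k * (N / (2 * 4 ^ k)) ≤ c * N := by
    simp only [hterm, ← mul_sum]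
    nlinarith [sum_geometric_two_le (K + 1), show 0 ≤ c * N by positivity]
  linarith [sum_le_card_mul_add_sum_card_lt hc.le ha]

section Exceedances

variable {Ω ι : Type*} [MeasurableSpace Ω] {μ : Measure Ω} [Fintype ι] {X : ι → Ω → ℝ}

lemma mul_measure_le_card_lt_le_sum (hX : ∀ i, Measurable (X i)) (c : ℝ) (t : ℝ) :
    ENNReal.ofReal t * μ {ω | t ≤ #{i | c < X i ω}} ≤ ∑ i, μ {ω | c < X i ω} := by
  have hA : ∀ i, MeasurableSet {ω | c < X i ω} := fun i => measurableSet_lt measurable_const (hX i)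
  let count : Ω → ENNReal := fun ω => ∑ i, {ω | c < X i ω}.indicator 1 ω
  have hcount : ∀ ω, count ω = #{i | c < X i ω} := fun ω => by
    simp [count, Set.indicator_apply, sum_boole]
  calc ENNReal.ofReal t * μ {ω | t ≤ #{i | c < X i ω}}
      ≤ ENNReal.ofReal t * μ {ω | ENNReal.ofReal t ≤ count ω} := by
        refine mul_le_mul_right (measure_mono fun ω (hω : t ≤ _) => ?_) _
        rw [Set.mem_ofPred_eq, hcount, ← ENNReal.ofReal_natCast]
        exact ENNReal.ofReal_le_ofReal hω
    _ ≤ ∫⁻ ω, count ω ∂μ :=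
        mul_meas_ge_le_lintegral₀ (Finset.measurable_sum _ fun i _ =>
          measurable_one.indicator (hA i)).aemeasurable _
    _ = ∑ i, μ {ω | c < X i ω} := by
        rw [lintegral_finsetSum _ fun i _ => measurable_one.indicator (hA i)]
        exact sum_congr rfl fun i _ => lintegral_indicator_one (hA i)

lemma measure_le_card_lt_le (hX : ∀ i, Measurable (X i)) {c q t : ℝ} (ht : 0 < t)
    (hq : ∀ i, μ {ω | c < X i ω} ≤ ENNReal.ofReal q) :
    μ {ω | t ≤ #{i | c < X i ω}} ≤ ENNReal.ofReal (Fintype.card ι * q / t) := by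
  rw [ENNReal.ofReal_div_of_pos ht, ENNReal.le_div_iff_mul_le (.inl (ENNReal.ofReal_pos.2 ht).ne')
    (.inl ENNReal.ofReal_ne_top), mul_comm,
    ENNReal.ofReal_mul (by positivity), ENNReal.ofReal_natCast]
  calc ENNReal.ofReal t * μ {ω | t ≤ #{i | c < X i ω}}
      ≤ ∑ i, μ {ω | c < X i ω} := mul_measure_le_card_lt_le_sum hX c t
    _ ≤ ∑ _i : ι, ENNReal.ofReal q := sum_le_sum fun i _ => hq i
    _ = _ := by simp

lemma measure_exists_lt_le {c q : ℝ} (hq : ∀ i, μ {ω | c < X i ω} ≤ ENNReal.ofReal q) :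
    μ {ω | ∃ i, c < X i ω} ≤ ENNReal.ofReal (Fintype.card ι * q) := by
  rw [Set.ofPred_exists, ENNReal.ofReal_mul (by positivity), ENNReal.ofReal_natCast]
  calc μ (⋃ i, {ω | c < X i ω}) ≤ ∑ i, μ {ω | c < X i ω} := measure_iUnion_fintype_le μ _
    _ ≤ ∑ _i : ι, ENNReal.ofReal q := sum_le_sum fun i _ => hq i
    _ = _ := by simp

lemma measure_le_card_lt_of_cubic_tail [Nonempty ι] (hX : ∀ i, Measurable (X i)) {B p x : ℝ}
    (hx : 0 < x) (htail : ∀ i, μ {ω | B * x < X i ω} ≤ ENNReal.ofReal (p / (64 * x ^ 3))) :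
    μ {ω | Fintype.card ι / (8 * x ^ 2) ≤ #{i | B * x < X i ω}} ≤ ENNReal.ofReal (p / (8 * x)) := by
  refine (measure_le_card_lt_le hX (by positivity) htail).trans_eq (congrArg _ ?_)
  have : (Fintype.card ι : ℝ) ≠ 0 := Nat.cast_ne_zero.2 Fintype.card_ne_zero
  field_simp
  ring

end Exceedances

lemma setOf_mul_card_le_sum_subset {Ω ι : Type*} [Fintype ι] {X : ι → Ω → ℝ} {B : ℝ}
    (hB : 0 < B) {K : ℕ} (hK : (Fintype.card ι : ℝ) ≤ 2 ^ K) :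
    {ω | B * Fintype.card ι ≤ ∑ i, X i ω} ⊆ {ω | ∃ i, B * Fintype.card ι < X i ω} ∪
      ⋃ k ∈ range (K + 1),
        {ω | (Fintype.card ι : ℝ) / (2 * 4 ^ k) ≤ #{i | B / 2 * 2 ^ k < X i ω}} := by
  intro ω (hω : B * _ ≤ _)
  by_cases h : ∃ i, B * Fintype.card ι < X i ω
  · exact .inl h
  push Not at h
  obtain ⟨k, hk, hcard⟩ := exists_le_card_lt_of_le_sum (K := K) (half_pos hB)
    (fun i => (h i).trans (by rw [pow_succ]; nlinarith)) (by linarith)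
  exact .inr (Set.mem_biUnion hk hcard)

theorem measure_mul_card_le_sum_lt {Ω ι : Type*} [MeasurableSpace Ω] {μ : Measure Ω}
    [Fintype ι] [Nonempty ι] {X : ι → Ω → ℝ} (hX : ∀ i, Measurable (X i)) {B p : ℝ}
    (hB : 0 < B) (hp : 0 < p)
    (htail : ∀ i, ∀ x : ℝ, 1 / 2 ≤ x → x ≤ Fintype.card ι →
      μ {ω | B * x < X i ω} ≤ ENNReal.ofReal (p / (64 * x ^ 3))) :
    μ {ω | B * Fintype.card ι ≤ ∑ i, X i ω} < ENNReal.ofReal p := by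
  obtain ⟨K, hNK, hKN⟩ := Nat.exists_le_two_pow_le_two_mul (Fintype.card_ne_zero (α := ι))
  have hN : (1 : ℝ) ≤ Fintype.card ι := Nat.one_le_cast.2 Fintype.card_pos
  replace hNK : (Fintype.card ι : ℝ) ≤ 2 ^ K := by exact_mod_cast hNK
  replace hKN : (2 : ℝ) ^ K ≤ 2 * Fintype.card ι := by exact_mod_cast hKN
  set N : ℝ := (Fintype.card ι : ℝ)
  let F : ℕ → Set Ω := fun k => {ω | N / (2 * 4 ^ k) ≤ #{i | B / 2 * 2 ^ k < X i ω}}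
  have hsub := setOf_mul_card_le_sum_subset (Ω := Ω) (X := X) hB hNK
  have hG : μ {ω | ∃ i, B * N < X i ω} ≤ ENNReal.ofReal (p / 64) := by
    refine (measure_exists_lt_le fun i => htail i N (by linarith) le_rfl).trans
      (ENNReal.ofReal_le_ofReal ?_)
    rw [show N * (p / (64 * N ^ 3)) = p / 64 / N ^ 2 by field_simp]
    exact div_le_self (by positivity) (one_le_pow₀ hN)
  have hF : ∀ k ∈ range (K + 1), μ (F k) ≤ ENNReal.ofReal (p / 4 * (1 / 2) ^ k) := by
    intro k hk
    have hk_le : (2 : ℝ) ^ k ≤ 2 ^ K :=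
      pow_le_pow_right₀ one_le_two (Nat.le_of_lt_succ (mem_range.1 hk))
    have h₁ : (2 : ℝ) * 4 ^ k = 8 * (2 ^ k / 2) ^ 2 := by
      rw [div_pow, ← pow_mul, mul_comm k, pow_mul]; ring
    have h₂ : B / 2 * 2 ^ k = B * (2 ^ k / 2) := by ring
    simp only [F, h₁, h₂]
    refine (measure_le_card_lt_of_cubic_tail hX (by positivity) fun i =>
      htail i _ (by linarith [one_le_pow₀ (M₀ := ℝ) one_le_two (n := k)]) (by linarith)).trans_eq
      (congrArg _ ?_)
    rw [one_div_pow]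
    field_simp
    ring
  calc μ {ω | B * N ≤ ∑ i, X i ω}
      ≤ μ {ω | ∃ i, B * N < X i ω} + ∑ k ∈ range (K + 1), μ (F k) :=
        (measure_mono hsub).trans ((measure_union_le _ _).trans
          (add_le_add_right (measure_biUnion_finset_le _ _) _))
    _ ≤ ENNReal.ofReal (p / 64) + ∑ k ∈ range (K + 1), ENNReal.ofReal (p / 4 * (1 / 2) ^ k) :=
        add_le_add hG (sum_le_sum hF)
    _ = ENNReal.ofReal (p / 64 + p / 4 * ∑ k ∈ range (K + 1), (1 / 2) ^ k) := by
        rw [ENNReal.ofReal_add (by positivity) (by positivity), mul_sum,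
          ENNReal.ofReal_sum_of_nonneg fun k _ => by positivity]
    _ < ENNReal.ofReal p := by
        rw [ENNReal.ofReal_lt_ofReal_iff hp]
        nlinarith [sum_geometric_two_le (K + 1)]

open MeasureTheory in
theorem stmt13_general {Ω : Type*} [MeasurableSpace Ω] (μ : Measure Ω)
    {I : Type*} [Fintype I] (N : ℕ) (hN : Fintype.card I = N) (hN1 : 1 ≤ N)
    {m n : ℕ} (M : I → Ω → Matrix (Fin m) (Fin n) ℝ)
    (hmeas : ∀ i a b, Measurable fun ω => M i ω a b)
    (B p : ℝ) (hB : 0 < B) (hp : 0 < p)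
    (hcond : ∀ i, ∀ x : ℝ, 1 / 2 ≤ x → x ≤ N →
      μ {ω | B * x < opNorm (M i ω)} ≤ ENNReal.ofReal (p / (64 * x ^ 3)))
    : μ {ω | B ≤ opNorm ((N : ℝ)⁻¹ • ∑ i, M i ω)} < ENNReal.ofReal p := by
  subst hN
  have : Nonempty I := Fintype.card_pos_iff.1 hN1
  refine (measure_mono fun ω (hω : B ≤ _) => ?_).trans_lt
    (measure_mul_card_le_sum_lt (fun i => measurable_opNorm (hmeas i)) hB hp hcond)
  have hN : (0 : ℝ) < Fintype.card I := by exact_mod_cast hN1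
  calc B * Fintype.card I ≤ Fintype.card I * opNorm ((Fintype.card I : ℝ)⁻¹ • ∑ i, M i ω) := by
        rw [mul_comm]; gcongr
    _ ≤ ∑ i, opNorm (M i ω) := by
        rw [opNorm_smul, abs_of_pos (inv_pos.2 hN), ← mul_assoc, mul_inv_cancel₀ hN.ne', one_mul]
        exact opNorm_sum_le _ _

open MeasureTheory in
theorem stmt13 {Ω : Type*} [MeasurableSpace Ω] (μ : Measure Ω)
    [IsProbabilityMeasure μ]
    {I : Type*} [Fintype I] (N : ℕ) (hN : Fintype.card I = N) (hN1 : 1 ≤ N)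
    {m n : ℕ} (M : I → Ω → Matrix (Fin m) (Fin n) ℝ)
    (hmeas : ∀ i a b, Measurable fun ω => M i ω a b)
    (B p : ℝ) (hB : 0 < B) (hp : 0 < p)
    (hcond : ∀ i, ∀ x : ℝ, 1 / 2 ≤ x → x ≤ N →
      μ {ω | B * x < opNorm (M i ω)} ≤ ENNReal.ofReal (p / (64 * x ^ 3)))
    : μ {ω | B ≤ opNorm ((N : ℝ)⁻¹ • ∑ i, M i ω)} < ENNReal.ofReal p :=
  stmt13_general μ N hN hN1 M hmeas B p hB hp hcond
end

section
/- Let H be a bipartite graph with partite sets U and V, with t = |V(H)| vertices and minimal vertex cover of size q. Then there exist a constant c > 0 and an integer N₀, depending only on H, such that for every n ≥ N₀ and every g ∈ Ω (i.e., for every input graph G on n vertices), ‖R_H(g)‖ ≥ c·n^{(t−q)/2}. -/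
abbrev SubsetsCard (n x : ℕ) := {A : Finset (Fin n) // A.card = x}

def tup {n x : ℕ} (A : SubsetsCard n x) (i : Fin x) : Fin n :=
  (A.1.orderIsoOfFin A.2 i : Fin n)

noncomputable def RH {n x y : ℕ} (E : Finset (Fin x × Fin y)) (g : Sym2 (Fin n) → Bool) :
    Matrix (SubsetsCard n x) (SubsetsCard n y) ℝ :=
  Matrix.of fun A B =>
    if Disjoint A.1 B.1 then ∏ e ∈ E, sgn (g s(tup A e.1, tup B e.2)) else 0

def IsVertexCover {x y : ℕ} (E : Finset (Fin x × Fin y)) (S : Finset (Fin x ⊕ Fin y)) : Prop :=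
  ∀ e ∈ E, Sum.inl e.1 ∈ S ∨ Sum.inr e.2 ∈ S

open Finset Function Matrix WithLp
open scoped InnerProductSpace

section OpNorm

variable {α β : Type*} [Fintype α] [Fintype β] [DecidableEq β]

theorem norm_toLp_two_eq_sqrt_dotProduct (u : α → ℝ) : ‖toLp 2 u‖ = √(u ⬝ᵥ u) := by
  rw [norm_eq_sqrt_real_inner, EuclideanSpace.inner_toLp_toLp, star_trivial]

theorem abs_dotProduct_mulVec_le_opNorm (M : Matrix α β ℝ) (u : α → ℝ) (v : β → ℝ) :
    |u ⬝ᵥ M *ᵥ v| ≤ opNorm M * √(u ⬝ᵥ u) * √(v ⬝ᵥ v) := by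
  set L := LinearMap.toContinuousLinearMap (toEuclideanLin M)
  have hinner : u ⬝ᵥ M *ᵥ v = ⟪toLp 2 u, L (toLp 2 v)⟫_ℝ := by
    rw [dotProduct_comm]; rfl
  rw [hinner, ← norm_toLp_two_eq_sqrt_dotProduct, ← norm_toLp_two_eq_sqrt_dotProduct]
  calc |⟪toLp 2 u, L (toLp 2 v)⟫_ℝ| ≤ ‖toLp 2 u‖ * ‖L (toLp 2 v)‖ := abs_real_inner_le_norm _ _
    _ ≤ ‖toLp 2 u‖ * (‖L‖ * ‖toLp 2 v‖) := by gcongr; exact L.le_opNorm _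
    _ = opNorm M * ‖toLp 2 u‖ * ‖toLp 2 v‖ := by rw [opNorm]; ring

theorem dotProduct_extend_zero {ι : Type*} [Fintype ι] {f : ι → α} (hf : Injective f)
    (P : ι → ℝ) (X : α → ℝ) : extend f P 0 ⬝ᵥ X = ∑ i, P i * X (f i) := by
  refine (Fintype.sum_of_injective f hf _ _ (fun A hA => ?_) fun i => ?_).symm
  · rw [extend_apply' _ _ _ (by simpa using hA), Pi.zero_apply, zero_mul]
  · rw [hf.extend_apply]

theorem sqrt_card_mul_card_le_opNorm {ι κ : Type*} [Fintype ι] [Fintype κ] (M : Matrix α β ℝ)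
    {f : ι → α} {h : κ → β} (hf : Injective f) (hh : Injective h) (P : ι → ℝ) (Q : κ → ℝ)
    (hP : ∀ i, |P i| = 1) (hQ : ∀ j, |Q j| = 1) (hM : ∀ i j, M (f i) (h j) = P i * Q j) :
    √(Fintype.card ι * Fintype.card κ) ≤ opNorm M := by
  have hP2 i : P i * P i = 1 := by rw [← abs_mul_abs_self, hP, one_mul]
  have hQ2 j : Q j * Q j = 1 := by rw [← abs_mul_abs_self, hQ, one_mul]
  set u := extend f P 0
  set v := extend h Q 0
  have huu : u ⬝ᵥ u = Fintype.card ι := by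
    simp [u, dotProduct_extend_zero hf, hf.extend_apply, hP2]
  have hvv : v ⬝ᵥ v = Fintype.card κ := by
    simp [v, dotProduct_extend_zero hh, hh.extend_apply, hQ2]
  have huMv : u ⬝ᵥ M *ᵥ v = Fintype.card ι * Fintype.card κ := by
    simp only [u, dotProduct_extend_zero hf, mulVec, dotProduct_comm (M _), v,
      dotProduct_extend_zero hh, hM]
    have hterm i j : P i * (Q j * (P i * Q j)) = (P i * P i) * (Q j * Q j) := by ring
    simp [Finset.mul_sum, hterm, hP2, hQ2]
  have hbound := abs_dotProduct_mulVec_le_opNorm M u v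
  rw [huMv, huu, hvv, mul_assoc, ← Real.sqrt_mul (by positivity),
    abs_of_nonneg (by positivity)] at hbound
  set s := √(Fintype.card ι * Fintype.card κ : ℝ)
  have hs : s * s = Fintype.card ι * Fintype.card κ := Real.mul_self_sqrt (by positivity)
  have hnorm : 0 ≤ opNorm M := norm_nonneg _
  nlinarith [Real.sqrt_nonneg (Fintype.card ι * Fintype.card κ : ℝ)]

end OpNorm

def SubsetsCard.ofStrictMono {n x : ℕ} (a : Fin x → Fin n) (ha : StrictMono a) :
    SubsetsCard n x :=
  ⟨univ.map ⟨a, ha.injective⟩, by simp⟩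

theorem tup_ofStrictMono {n x : ℕ} {a : Fin x → Fin n} (ha : StrictMono a) :
    tup (SubsetsCard.ofStrictMono a ha) = a := by
  funext i
  rw [tup, coe_orderIsoOfFin_apply,
    ← orderEmbOfFin_unique _ (fun i => by simp [SubsetsCard.ofStrictMono]) ha]

theorem RH_ofStrictMono {n x y : ℕ} (E : Finset (Fin x × Fin y)) (g : Sym2 (Fin n) → Bool)
    {a : Fin x → Fin n} {b : Fin y → Fin n} (ha : StrictMono a) (hb : StrictMono b)
    (hab : ∀ i j, a i ≠ b j) :
    RH E g (.ofStrictMono a ha) (.ofStrictMono b hb) = ∏ e ∈ E, sgn (g s(a e.1, b e.2)) := by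
  have hdisj : Disjoint (SubsetsCard.ofStrictMono a ha).1 (SubsetsCard.ofStrictMono b hb).1 := by
    simp only [SubsetsCard.ofStrictMono, disjoint_left, mem_map, mem_univ, true_and]
    rintro _ ⟨i, rfl⟩ ⟨j, hj⟩
    exact hab i j hj.symm
  simp [RH, hdisj, tup_ofStrictMono]

theorem IsVertexCover.prod_eq_mul {x y : ℕ} {E : Finset (Fin x × Fin y)}
    {S : Finset (Fin x ⊕ Fin y)} (hS : IsVertexCover E S) {γ δ M : Type*} [CommMonoid M]
    (F : Fin x × Fin y → γ → δ → M) {a a₀ : Fin x → γ} {b b₀ : Fin y → δ}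
    (ha : ∀ i, .inl i ∈ S → a i = a₀ i) (hb : ∀ j, .inr j ∈ S → b j = b₀ j) :
    ∏ e ∈ E, F e (a e.1) (b e.2) =
      (∏ e ∈ E with .inl e.1 ∉ S, F e (a e.1) (b₀ e.2)) *
        ∏ e ∈ E with .inl e.1 ∈ S, F e (a₀ e.1) (b e.2) := by
  rw [← prod_filter_not_mul_prod_filter E (fun e => .inl e.1 ∈ S)]
  congr 1
  · refine prod_congr rfl fun e he => ?_
    rw [mem_filter] at he
    rw [hb e.2 ((hS e he.1).resolve_left he.2)]
  · refine prod_congr rfl fun e he => ?_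
    rw [ha e.1 (mem_filter.1 he).2]

section Blocks

variable {t m n : ℕ} (h : t * m ≤ n)

-- the point `r + m * b`, i.e. the `r`-th point of the `b`-th block of length `m`
def blockPos (b : Fin t) (r : Fin m) : Fin n :=
  Fin.castLE h (finProdFinEquiv (b, r))

theorem blockPos_lt_blockPos {b b' : Fin t} (hbb' : b < b') (r r' : Fin m) :
    blockPos h b r < blockPos h b' r' := by
  simp only [blockPos, Fin.lt_def, Fin.val_castLE, finProdFinEquiv_apply_val]
  have := r.2
  have : m * (b + 1) ≤ m * b' := Nat.mul_le_mul_left m hbb'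
  nlinarith

theorem blockPos_inj {b b' : Fin t} {r r' : Fin m} :
    blockPos h b r = blockPos h b' r' ↔ b = b' ∧ r = r' := by
  simp [blockPos, Fin.castLE_inj]

theorem strictMono_blockPos {x : ℕ} {e : Fin x → Fin t} (he : StrictMono e)
    (s : Fin x → Fin m) :
    StrictMono fun i => blockPos h (e i) (s i) :=
  fun _ _ hij => blockPos_lt_blockPos h (he hij) _ _

def blockSubset {x : ℕ} {e : Fin x → Fin t} (he : StrictMono e) (s : Fin x → Fin m) :
    SubsetsCard n x :=
  .ofStrictMono _ (strictMono_blockPos h he s)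

theorem blockSubset_injective {x : ℕ} {e : Fin x → Fin t} (he : StrictMono e) :
    Injective (blockSubset h he (m := m)) := by
  intro s s' hss'
  funext i
  have := congrFun (congrArg tup hss') i
  rw [blockSubset, blockSubset, tup_ofStrictMono, tup_ofStrictMono] at this
  exact ((blockPos_inj h).1 this).2

end Blocks

theorem abs_prod_sgn {ι : Type*} (s : Finset ι) (b : ι → Bool) :
    |∏ i ∈ s, sgn (b i)| = 1 := by
  rw [abs_prod]
  exact prod_eq_one fun i _ => by cases b i <;> simp [sgn]

section Construction

variable {x y m n : ℕ} (E : Finset (Fin x × Fin y)) (g : Sym2 (Fin n) → Bool)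
  (h : (x + y) * m ≤ n)

noncomputable def edgeSign (e : Fin x × Fin y) (r r' : Fin m) : ℝ :=
  sgn (g s(blockPos h (Fin.castAdd y e.1) r, blockPos h (Fin.natAdd x e.2) r'))

theorem RH_blockSubset (s : Fin x → Fin m) (s' : Fin y → Fin m) :
    RH E g (blockSubset h (Fin.strictMono_castAdd y) s)
        (blockSubset h (Fin.strictMono_natAdd x) s') =
      ∏ e ∈ E, edgeSign g h e (s e.1) (s' e.2) :=
  RH_ofStrictMono E g _ _ fun i j hij => by
    have hlt : (Fin.castAdd y i : ℕ) < Fin.natAdd x j := by simp; omega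
    exact hlt.ne (congrArg Fin.val ((blockPos_inj h).1 hij).1)

theorem card_fun_subtype_mul_card_fun_subtype (S : Finset (Fin x ⊕ Fin y)) :
    Fintype.card ({i : Fin x // .inl i ∉ S} → Fin m) *
      Fintype.card ({j : Fin y // .inr j ∉ S} → Fin m) = m ^ (x + y - #S) := by
  rw [Fintype.card_fun, Fintype.card_fun, ← pow_add, ← Fintype.card_sum,
    ← Fintype.card_congr (Equiv.subtypeSum (p := (· ∉ S))), Fintype.card_fin,
    Fintype.card_subtype_compl]
  simp

end Construction

theorem IsVertexCover.sqrt_pow_le_opNorm_RH {x y m n : ℕ} {E : Finset (Fin x × Fin y)}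
    {S : Finset (Fin x ⊕ Fin y)} (hS : IsVertexCover E S) (h : (x + y) * m ≤ n) (r₀ : Fin m)
    (g : Sym2 (Fin n) → Bool) :
    √((m : ℝ) ^ (x + y - #S)) ≤ opNorm (RH E g) := by
  -- vertices of the cover sit at slot `r₀` of their block, the others range over their block
  let fillU (φ : {i : Fin x // .inl i ∉ S} → Fin m) : Fin x → Fin m :=
    extend Subtype.val φ fun _ => r₀
  let fillV (ψ : {j : Fin y // .inr j ∉ S} → Fin m) : Fin y → Fin m :=
    extend Subtype.val ψ fun _ => r₀
  have hfillU φ i (hi : .inl i ∈ S) : fillU φ i = r₀ :=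
    extend_apply' _ _ _ fun ⟨c, hc⟩ => c.2 (hc ▸ hi)
  have hfillV ψ j (hj : .inr j ∈ S) : fillV ψ j = r₀ :=
    extend_apply' _ _ _ fun ⟨c, hc⟩ => c.2 (hc ▸ hj)
  have hentry φ ψ : RH E g (blockSubset h (Fin.strictMono_castAdd y) (fillU φ))
      (blockSubset h (Fin.strictMono_natAdd x) (fillV ψ)) =
      (∏ e ∈ E with .inl e.1 ∉ S, edgeSign g h e (fillU φ e.1) r₀) *
        ∏ e ∈ E with .inl e.1 ∈ S, edgeSign g h e r₀ (fillV ψ e.2) := by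
    rw [RH_blockSubset]
    exact hS.prod_eq_mul (edgeSign g h) (hfillU φ) (hfillV ψ)
  have := sqrt_card_mul_card_le_opNorm (RH E g) (hM := hentry)
    ((blockSubset_injective h _).comp (extend_injective Subtype.val_injective _))
    ((blockSubset_injective h _).comp (extend_injective Subtype.val_injective _))
    _ _ (fun _ => abs_prod_sgn _ _) (fun _ => abs_prod_sgn _ _)
  rwa [← Nat.cast_mul, card_fun_subtype_mul_card_fun_subtype, Nat.cast_pow] at this

theorem stmt17 (x y q : ℕ) (E : Finset (Fin x × Fin y))
    (hq : IsLeast {m | ∃ S : Finset (Fin x ⊕ Fin y), IsVertexCover E S ∧ S.card = m} q) :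
    ∃ (c : ℝ) (N₀ : ℕ), 0 < c ∧
      ∀ n : ℕ, N₀ ≤ n → ∀ g : Sym2 (Fin n) → Bool,
        c * (n : ℝ) ^ ((((x + y : ℕ) : ℝ) - (q : ℝ)) / 2) ≤ opNorm (RH E g) := by
  obtain ⟨⟨S, hS, rfl⟩, -⟩ := hq
  set t := x + y
  have hSt : #S ≤ t := by simpa [t] using card_le_univ S
  set k : ℝ := ((t - #S : ℕ) : ℝ) / 2
  refine ⟨(2 * (t + 1) : ℝ)⁻¹ ^ k, t + 1, by positivity, fun n hn g => ?_⟩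
  set m := n / (t + 1)
  have hm : 0 < m := Nat.div_pos hn t.succ_pos
  have hmn : t * m ≤ n := (Nat.mul_le_mul_right m t.le_succ).trans (Nat.mul_div_le n (t + 1))
  have hnm : (n : ℝ) ≤ 2 * (t + 1) * m := by
    have : n < (t + 1) * (m + 1) := Nat.lt_mul_div_succ n t.succ_pos
    norm_cast; nlinarith
  have hopNorm := hS.sqrt_pow_le_opNorm_RH hmn ⟨0, hm⟩ g
  rw [Real.sqrt_eq_rpow, ← Real.rpow_natCast, ← Real.rpow_mul (by positivity),
    ← div_eq_mul_one_div] at hopNorm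
  rw [← Nat.cast_sub hSt, ← Real.mul_rpow (by positivity) (by positivity)]
  calc ((2 * (t + 1) : ℝ)⁻¹ * n) ^ k ≤ (m : ℝ) ^ k := by
        gcongr
        rw [inv_mul_le_iff₀ (by positivity)]
        exact hnm
    _ ≤ opNorm (RH E g) := hopNorm
end

section
/- Let M be a nonzero real m×n matrix such that M = Σ_{i=1}^{s} c_i·u_i·v_iᵀ for some vectors u_i ∈ ℝ^m, v_i ∈ ℝ^n and positive real coefficients c_1,…,c_s. Then ‖M‖ ≥ ‖M‖_Fr² / (Σ_{i=1}^{s} c_i·‖u_i‖·‖v_i‖), where ‖M‖ is the operator norm, ‖M‖_Fr = √(Σ_{i,j} M(i,j)²) is the Frobenius norm, and ‖u_i‖, ‖v_i‖ are Euclidean norms. -/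
noncomputable def frobNorm {α β : Type*} [Fintype α] [Fintype β] (M : Matrix α β ℝ) : ℝ :=
  Real.sqrt (∑ a, ∑ b, (M a b) ^ 2)

noncomputable def vecNorm {α : Type*} [Fintype α] (u : α → ℝ) : ℝ :=
  Real.sqrt (∑ a, (u a) ^ 2)

open Matrix

section

variable {α β ι : Type*} [Fintype α] [Fintype β] [Fintype ι]

lemma vecNorm_eq_norm_toLp (x : α → ℝ) : vecNorm x = ‖WithLp.toLp 2 x‖ := by
  simp [vecNorm, EuclideanSpace.norm_eq, sq_abs]

lemma frobNorm_sq (M : Matrix α β ℝ) : frobNorm M ^ 2 = ∑ a, ∑ b, M a b * M a b := by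
  rw [frobNorm, Real.sq_sqrt (by positivity)]
  simp only [sq]

lemma dotProduct_mulVec_le_opNorm_mul [DecidableEq β] (M : Matrix α β ℝ) (w : α → ℝ)
    (x : β → ℝ) : w ⬝ᵥ M *ᵥ x ≤ opNorm M * (vecNorm w * vecNorm x) := by
  set T := LinearMap.toContinuousLinearMap (Matrix.toEuclideanLin M)
  have h_inner : w ⬝ᵥ M *ᵥ x = inner ℝ (WithLp.toLp 2 w) (T (WithLp.toLp 2 x)) := by
    simp [T, inner, dotProduct, mul_comm]
  rw [h_inner, vecNorm_eq_norm_toLp, vecNorm_eq_norm_toLp]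
  calc inner ℝ (WithLp.toLp 2 w) (T (WithLp.toLp 2 x))
      ≤ ‖WithLp.toLp 2 w‖ * ‖T (WithLp.toLp 2 x)‖ := real_inner_le_norm _ _
    _ ≤ ‖WithLp.toLp 2 w‖ * (‖T‖ * ‖WithLp.toLp 2 x‖) := by gcongr; exact T.le_opNorm _
    _ = opNorm M * (‖WithLp.toLp 2 w‖ * ‖WithLp.toLp 2 x‖) := by rw [opNorm]; ring

lemma sum_sum_vecMulVec_mul (u : α → ℝ) (v : β → ℝ) (N : Matrix α β ℝ) :
    ∑ a, ∑ b, vecMulVec u v a b * N a b = u ⬝ᵥ N *ᵥ v := by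
  simp only [vecMulVec_apply, dotProduct, mulVec, Finset.mul_sum]
  exact Finset.sum_congr rfl fun a _ => Finset.sum_congr rfl fun b _ => by ring

lemma sum_sum_mul_eq_sum_dotProduct_mulVec (c : ι → ℝ) (u : ι → α → ℝ) (v : ι → β → ℝ)
    (N : Matrix α β ℝ) :
    ∑ a, ∑ b, (∑ i, c i • vecMulVec (u i) (v i)) a b * N a b
      = ∑ i, c i * (u i ⬝ᵥ N *ᵥ v i) := by
  simp_rw [← sum_sum_vecMulVec_mul, Matrix.sum_apply, Matrix.smul_apply, smul_eq_mul,
    Finset.sum_mul, Finset.mul_sum, mul_assoc]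
  exact Finset.sum_comm_cycle

lemma frobNorm_sq_le_opNorm_mul_sum [DecidableEq β] (c : ι → ℝ) (u : ι → α → ℝ)
    (v : ι → β → ℝ) (hc : ∀ i, 0 ≤ c i) :
    frobNorm (∑ i, c i • vecMulVec (u i) (v i)) ^ 2
      ≤ opNorm (∑ i, c i • vecMulVec (u i) (v i)) * ∑ i, c i * vecNorm (u i) * vecNorm (v i) := by
  set M := ∑ i, c i • vecMulVec (u i) (v i)
  rw [frobNorm_sq, sum_sum_mul_eq_sum_dotProduct_mulVec c u v M, Finset.mul_sum]
  refine Finset.sum_le_sum fun i _ => ?_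
  calc c i * (u i ⬝ᵥ M *ᵥ v i)
      ≤ c i * (opNorm M * (vecNorm (u i) * vecNorm (v i))) :=
        mul_le_mul_of_nonneg_left (dotProduct_mulVec_le_opNorm_mul M _ _) (hc i)
    _ = opNorm M * (c i * vecNorm (u i) * vecNorm (v i)) := by ring

end

theorem stmt18_general {m n : ℕ} (M : Matrix (Fin m) (Fin n) ℝ)
    (s : ℕ) (c : Fin s → ℝ) (u : Fin s → (Fin m → ℝ)) (v : Fin s → (Fin n → ℝ))
    (hc : ∀ i, 0 < c i)
    (hrep : M = ∑ i, c i • Matrix.vecMulVec (u i) (v i)) :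
    frobNorm M ^ 2 / (∑ i, c i * vecNorm (u i) * vecNorm (v i)) ≤ opNorm M := by
  have hc' : ∀ i, 0 ≤ c i := fun i => (hc i).le
  have hD : 0 ≤ ∑ i, c i * vecNorm (u i) * vecNorm (v i) :=
    Finset.sum_nonneg fun i _ =>
      mul_nonneg (mul_nonneg (hc' i) (Real.sqrt_nonneg _)) (Real.sqrt_nonneg _)
  subst hrep
  exact div_le_of_le_mul₀ hD (norm_nonneg _) (frobNorm_sq_le_opNorm_mul_sum c u v hc')

theorem stmt18 {m n : ℕ} (M : Matrix (Fin m) (Fin n) ℝ) (hM : M ≠ 0)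
    (s : ℕ) (c : Fin s → ℝ) (u : Fin s → (Fin m → ℝ)) (v : Fin s → (Fin n → ℝ))
    (hc : ∀ i, 0 < c i)
    (hrep : M = ∑ i, c i • Matrix.vecMulVec (u i) (v i)) :
    frobNorm M ^ 2 / (∑ i, c i * vecNorm (u i) * vecNorm (v i)) ≤ opNorm M :=
  stmt18_general M s c u v hc hrep
end
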